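/- arXiv:2205.08504 — 3 statements merged into one kernel-verified Lean document; each statement's English description precedes it below -/
import Mathlib

section
/- Let n ≥ 1 and v be integers with n+v ≥ 0, and let w ∈ ℂ be nonzero. Then e^{nw} − Σ_{j=0}^{n+v−1} (nw)^j/j! = ((nw)^{n+v}/(n+v)!) · (1 + n w ∫₀¹ e^{n(w(1−z)+log z)} z^v dz). Consequently the function S_n(w;v) defined by the series truncation extends, via the formula S_n(w;v) = 1 + n w ∫₀¹ e^{n(w(1−z)+log z)} z^v dz, to an entire function of w for all real n > 0 and v ∈ ℂ with Re(n+v) > −1. -/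
open Filter Asymptotics MeasureTheory

/-- De Moivre polynomial `A_{n,k}(a_1, a_2, ...)`: the coefficient of `x^n` in
`(a_1 x + a_2 x^2 + ...)^k`. Here `a : ℕ → ℂ` with `a i` playing the role of `a_i` for `i ≥ 1`. -/
noncomputable def dmPoly (a : ℕ → ℂ) (n k : ℕ) : ℂ :=
  PowerSeries.coeff n ((PowerSeries.mk fun i => if i = 0 then 0 else a i) ^ k)

/-- Generalized binomial coefficient `binom(v, m) = v(v-1)⋯(v-m+1)/m!`. -/
noncomputable def cbinom (v : ℂ) (m : ℕ) : ℂ :=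
  (∏ i ∈ Finset.range m, (v - i)) / (Nat.factorial m)

/-- `S_n(w; v) = 1 + n w ∫₀¹ e^{n (w(1-z) + log z)} z^v dz`. -/
noncomputable def Sfun (n : ℝ) (w v : ℂ) : ℂ :=
  1 + (n : ℂ) * w *
    ∫ z in (0:ℝ)..1, Complex.exp ((n : ℂ) * (w * (1 - (z:ℂ)) + (Real.log z : ℂ))) * (z:ℂ) ^ v

/-- `T_n(w; v) = e^{n w} (n w)^{-(n+v)} Γ(n+v+1) - S_n(w; v)`, with
`(n w)^{n+v} = e^{(n+v)(log n + Log w)}` (principal logarithm). -/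
noncomputable def Tfun (n : ℝ) (w v : ℂ) : ℂ :=
  Complex.exp ((n : ℂ) * w) *
    Complex.exp (-(((n : ℂ) + v) * ((Real.log n : ℂ) + Complex.log w))) *
    Complex.Gamma ((n : ℂ) + v + 1) - Sfun n w v

/-- `γ_r(v)`. -/
noncomputable def gamCoeff (v : ℂ) (r : ℕ) : ℂ :=
  ∑ m ∈ Finset.range (2*r+1), (-1)^m * cbinom v (2*r - m) *
    ∑ k ∈ Finset.range (m+1),
      (Nat.doubleFactorial (2*r+2*k-1) : ℂ) / ((-1)^k * (Nat.factorial k : ℂ)) *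
        dmPoly (fun j => 1 / ((j:ℂ) + 2)) m k

/-- `ρ_r(v)`. -/
noncomputable def rhoCoeff (v : ℂ) (r : ℕ) : ℂ :=
  (if r = 0 then 1 else 0) -
    ∑ m ∈ Finset.range (2*r+2), (-1)^m * cbinom v (2*r+1-m) *
      ∑ k ∈ Finset.range (m+1),
        (Nat.doubleFactorial (2*r+2*k) : ℂ) / ((-1)^k * (Nat.factorial k : ℂ)) *
          dmPoly (fun j => 1 / ((j:ℂ) + 2)) m k

/-- `U_r(w; v)`. -/
noncomputable def UCoeff (w v : ℂ) (r : ℕ) : ℂ :=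
  (if r = 0 then 1 else 0) -
    ∑ m ∈ Finset.range (r+1), (-1)^m * cbinom v (r-m) *
      ∑ k ∈ Finset.range (m+1),
        w / (w-1)^(r+k+1) * ((Nat.factorial (r+k) : ℂ) / (Nat.factorial k : ℂ)) *
          dmPoly (fun j => 1 / ((j:ℂ) + 1)) m k

private lemma exp_taylor_aux' (x : ℂ) (N : ℕ) :
    Complex.exp x - ∑ j ∈ Finset.range (N+1), x ^ j / (Nat.factorial j : ℂ) =
      x ^ (N+1) / (Nat.factorial N : ℂ) *
        ∫ z in (0:ℝ)..1, (z:ℂ) ^ N * Complex.exp (x * (1 - (z:ℂ))) := by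
  set c : ℂ := x ^ (N+1) / (Nat.factorial N : ℂ) with hc
  have key : ∀ z ∈ Set.uIcc (0:ℝ) 1,
      HasDerivAt (fun t : ℝ => Complex.exp (x * (1 - (t:ℂ))) *
          ∑ j ∈ Finset.range (N+1), x ^ j * (t:ℂ) ^ j / (Nat.factorial j : ℂ))
        (-c * ((z:ℂ) ^ N * Complex.exp (x * (1 - (z:ℂ))))) z := by
    intro z _
    have hofReal : HasDerivAt (fun t : ℝ => (t:ℂ)) 1 z := Complex.ofRealCLM.hasDerivAt
    have h1 : HasDerivAt (fun t : ℝ => Complex.exp (x * (1 - (t:ℂ))))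
        (-x * Complex.exp (x * (1 - (z:ℂ)))) z := by
      have h0 : HasDerivAt (fun t : ℝ => x * (1 - (t:ℂ))) (-x) z := by
        simpa using ((hasDerivAt_const z (1:ℂ)).sub hofReal).const_mul x
      simpa [mul_comm] using h0.cexp
    have h2 : HasDerivAt
        (fun t : ℝ => ∑ j ∈ Finset.range (N+1), x ^ j * (t:ℂ) ^ j / (Nat.factorial j : ℂ))
        (∑ j ∈ Finset.range (N+1), x ^ j * ((j:ℂ) * (z:ℂ) ^ (j-1)) / (Nat.factorial j : ℂ)) z := by
      apply HasDerivAt.fun_sum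
      intro j _
      have hp : HasDerivAt (fun t : ℝ => (t:ℂ) ^ j) ((j:ℂ) * (z:ℂ) ^ (j-1)) z := by
        simpa using (hasDerivAt_pow j ((z:ℂ))).comp_ofReal
      have := (hp.const_mul (x ^ j)).div_const ((Nat.factorial j : ℂ))
      simpa [mul_comm, mul_assoc, mul_left_comm] using this
    have hmul := h1.mul h2
    refine hmul.congr_deriv (Eq.symm ?_)
    have alg : (∑ j ∈ Finset.range (N+1), x ^ j * ((j:ℂ) * (z:ℂ) ^ (j-1)) / (Nat.factorial j : ℂ))
        - x * ∑ j ∈ Finset.range (N+1), x ^ j * (z:ℂ) ^ j / (Nat.factorial j : ℂ)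
        = -(x ^ (N+1) * (z:ℂ) ^ N / (Nat.factorial N : ℂ)) := by
      rw [Finset.mul_sum, Finset.sum_range_succ' (fun j => x ^ j * ((j:ℂ) * (z:ℂ) ^ (j-1)) / (Nat.factorial j : ℂ)) N,
        Finset.sum_range_succ (fun j => x * (x ^ j * (z:ℂ) ^ j / (Nat.factorial j : ℂ))) N]
      have hterm : ∀ j : ℕ, x ^ (j+1) * (((j+1:ℕ):ℂ) * (z:ℂ) ^ (j+1-1)) / (Nat.factorial (j+1) : ℂ)
          = x * (x ^ j * (z:ℂ) ^ j / (Nat.factorial j : ℂ)) := by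
        intro j
        have hj : ((Nat.factorial (j+1) : ℂ)) = ((j:ℂ)+1) * (Nat.factorial j : ℂ) := by
          rw [Nat.factorial_succ]; push_cast; ring
        have hne : ((j:ℂ)+1) ≠ 0 := by
          exact_mod_cast (Nat.cast_ne_zero (R := ℂ)).2 (Nat.succ_ne_zero j)
        have hfne : (Nat.factorial j : ℂ) ≠ 0 := by
          exact_mod_cast (Nat.cast_ne_zero (R := ℂ)).2 (Nat.factorial_ne_zero j)
        rw [hj, Nat.add_sub_cancel]
        field_simp
        push_cast
        ring
      simp only [hterm]
      push_cast
      simp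
      ring
    calc -c * ((z:ℂ) ^ N * Complex.exp (x * (1 - (z:ℂ))))
        = Complex.exp (x * (1 - (z:ℂ))) *
            ((∑ j ∈ Finset.range (N+1), x ^ j * ((j:ℂ) * (z:ℂ) ^ (j-1)) / (Nat.factorial j : ℂ))
             - x * ∑ j ∈ Finset.range (N+1), x ^ j * (z:ℂ) ^ j / (Nat.factorial j : ℂ)) := by
          rw [alg, hc]; ring
      _ = _ := by ring
  have hcont : IntervalIntegrable
      (fun z : ℝ => -c * ((z:ℂ) ^ N * Complex.exp (x * (1 - (z:ℂ))))) volume 0 1 := by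
    apply Continuous.intervalIntegrable
    fun_prop
  have hFTC := intervalIntegral.integral_eq_sub_of_hasDerivAt key hcont
  rw [intervalIntegral.integral_const_mul] at hFTC
  have hF1 : Complex.exp (x * (1 - ((1:ℝ):ℂ))) *
      ∑ j ∈ Finset.range (N+1), x ^ j * ((1:ℝ):ℂ) ^ j / (Nat.factorial j : ℂ)
      = ∑ j ∈ Finset.range (N+1), x ^ j / (Nat.factorial j : ℂ) := by
    simp
  have hF0 : Complex.exp (x * (1 - ((0:ℝ):ℂ))) *
      ∑ j ∈ Finset.range (N+1), x ^ j * ((0:ℝ):ℂ) ^ j / (Nat.factorial j : ℂ)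
      = Complex.exp x := by
    rw [Finset.sum_eq_single 0]
    · simp
    · intro j _ hj; simp [zero_pow hj]
    · simp
  rw [hF1, hF0] at hFTC
  have := hFTC
  linear_combination this

private lemma part_one : (∀ (n : ℕ) (v : ℤ) (w : ℂ), 1 ≤ n → 0 ≤ (n : ℤ) + v → w ≠ 0 →
      Complex.exp ((n:ℂ) * w) -
          ∑ j ∈ Finset.range ((n : ℤ) + v).toNat, ((n:ℂ) * w) ^ j / (Nat.factorial j : ℂ) =
        ((n:ℂ) * w) ^ (((n : ℤ) + v).toNat) / (Nat.factorial (((n : ℤ) + v).toNat) : ℂ) *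
          Sfun (n : ℝ) w ((v : ℤ) : ℂ)) := by
  intro n v w hn hnv hw
  set N : ℕ := ((n : ℤ) + v).toNat with hNdef
  set x : ℂ := (n:ℂ) * w with hx
  -- integrand congruence
  have hint : (∫ z in (0:ℝ)..1,
        Complex.exp (((n:ℝ):ℂ) * (w * (1 - (z:ℂ)) + (Real.log z : ℂ))) * (z:ℂ) ^ ((v:ℤ):ℂ))
      = ∫ z in (0:ℝ)..1, (z:ℂ) ^ N * Complex.exp (x * (1 - (z:ℂ))) := by
    apply intervalIntegral.integral_congr_ae
    filter_upwards with z hz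
    rw [Set.uIoc_of_le (by norm_num : (0:ℝ) ≤ 1)] at hz
    obtain ⟨hz0, hz1⟩ := hz
    have hz0' : ((z:ℝ):ℂ) ≠ 0 := by exact_mod_cast ne_of_gt hz0
    have hsplit : Complex.exp (((n:ℝ):ℂ) * (w * (1 - (z:ℂ)) + (Real.log z : ℂ)))
        = Complex.exp (x * (1 - (z:ℂ))) * Complex.exp ((n:ℂ) * (Real.log z : ℂ)) := by
      rw [← Complex.exp_add, hx]; push_cast; ring_nf
    have hlog : Complex.exp ((n:ℂ) * (Real.log z : ℂ)) = ((z:ℝ):ℂ) ^ (n:ℕ) := by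
      rw [Complex.exp_nat_mul, ← Complex.ofReal_exp, Real.exp_log hz0]
    have hcpow : ((z:ℝ):ℂ) ^ ((v:ℤ):ℂ) = ((z:ℝ):ℂ) ^ (v : ℤ) := Complex.cpow_intCast _ _
    rw [hsplit, hlog, hcpow]
    have : ((z:ℝ):ℂ) ^ (n:ℕ) * ((z:ℝ):ℂ) ^ (v:ℤ) = ((z:ℝ):ℂ) ^ (N:ℕ) := by
      rw [← zpow_natCast ((z:ℝ):ℂ) n, ← zpow_add₀ hz0', ← zpow_natCast ((z:ℝ):ℂ) N,
        hNdef, Int.toNat_of_nonneg hnv]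
    linear_combination Complex.exp (x * (1 - (z:ℂ))) * this
  have key := exp_taylor_aux' x N
  have hsum : ∑ j ∈ Finset.range (N+1), x ^ j / (Nat.factorial j : ℂ)
      = (∑ j ∈ Finset.range N, x ^ j / (Nat.factorial j : ℂ)) + x ^ N / (Nat.factorial N : ℂ) :=
    Finset.sum_range_succ _ _
  rw [hsum] at key
  unfold Sfun
  rw [hint]
  push_cast
  linear_combination key

open Metric in
private lemma part_two : (∀ (n : ℝ) (v : ℂ), 0 < n → -1 < n + v.re →
    Differentiable ℂ (fun w : ℂ => Sfun n w v)) := by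
  intro n v hn hnv
  set μ : Measure ℝ := volume.restrict (Set.Ioc (0:ℝ) 1) with hμ
  set F : ℂ → ℝ → ℂ := fun w z =>
    Complex.exp ((n : ℂ) * (w * (1 - (z:ℂ)) + (Real.log z : ℂ))) * (z:ℂ) ^ v with hF
  set F' : ℂ → ℝ → ℂ := fun w z => (n : ℂ) * (1 - (z:ℂ)) * F w z with hF'
  -- continuity on Ioc of F w
  have hcont : ∀ w : ℂ, ContinuousOn (F w) (Set.Ioc (0:ℝ) 1) := by
    intro w
    apply ContinuousOn.mul
    · apply Complex.continuous_exp.comp_continuousOn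
      apply ContinuousOn.mul continuousOn_const
      apply ContinuousOn.add
      · fun_prop
      · exact Complex.continuous_ofReal.comp_continuousOn
          (Real.continuousOn_log.mono (fun z hz => ne_of_gt hz.1))
    · intro z hz
      apply ContinuousAt.continuousWithinAt
      have hslit : ((z:ℝ):ℂ) ∈ Complex.slitPlane := by
        simp only [Complex.mem_slitPlane_iff]
        left; simpa using hz.1
      exact (continuousAt_cpow_const hslit).comp Complex.continuous_ofReal.continuousAt
  have hmeasF : ∀ w : ℂ, AEStronglyMeasurable (F w) μ := fun w =>
    (hcont w).aestronglyMeasurable measurableSet_Ioc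
  have hmeasF' : ∀ w : ℂ, AEStronglyMeasurable (F' w) μ := by
    intro w
    apply ContinuousOn.aestronglyMeasurable _ measurableSet_Ioc
    exact (continuousOn_const.mul (by fun_prop)).mul (hcont w)
  -- pointwise norm identity for F
  have hnormF : ∀ (w : ℂ) (z : ℝ), z ∈ Set.Ioc (0:ℝ) 1 →
      ‖F w z‖ = Real.exp (n * (w.re * (1 - z))) * z ^ (n + v.re) := by
    intro w z hz
    obtain ⟨hz0, hz1⟩ := hz
    rw [hF]
    simp only [norm_mul]
    rw [Complex.norm_exp,
      Complex.norm_cpow_eq_rpow_re_of_pos hz0]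
    have hre : ((n : ℂ) * (w * (1 - (z:ℂ)) + (Real.log z : ℂ))).re
        = n * (w.re * (1 - z)) + n * Real.log z := by
      simp [Complex.mul_re, Complex.add_re, Complex.ofReal_re, Complex.ofReal_im,
        Complex.sub_re, Complex.one_re, Complex.sub_im, Complex.one_im]
      ring
    rw [hre, Real.exp_add, Real.rpow_add hz0]
    rw [Real.rpow_def_of_pos hz0 n]
    ring_nf
  -- differentiability in w for fixed z
  have hderiv : ∀ (z : ℝ), z ∈ Set.Ioc (0:ℝ) 1 → ∀ w : ℂ,
      HasDerivAt (fun w => F w z) (F' w z) w := by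
    intro z hz w
    have h0 : HasDerivAt (fun w : ℂ => (n:ℂ) * (w * (1 - (z:ℂ)) + (Real.log z : ℂ)))
        ((n:ℂ) * (1 - (z:ℂ))) w := by
      simpa using (((hasDerivAt_id w).mul_const ((1:ℂ) - (z:ℂ))).add_const
        ((Real.log z : ℂ))).const_mul ((n:ℂ))
    have := (h0.cexp).mul_const ((z:ℂ) ^ v)
    rw [hF', hF]
    refine this.congr_deriv ?_
    ring
  -- main: differentiability of the integral
  have hdiff : Differentiable ℂ (fun w : ℂ => ∫ z, F w z ∂μ) := by
    intro w₀
    set B : ℝ := n * Real.exp (n * (‖w₀‖ + 1)) with hB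
    have hkey := hasDerivAt_integral_of_dominated_loc_of_deriv_le (μ := μ)
      (F := F) (F' := F') (x₀ := w₀) (s := ball w₀ 1)
      (bound := fun z => B * z ^ (n + v.re)) (ball_mem_nhds w₀ one_pos)
      (Filter.Eventually.of_forall hmeasF) ?_ (hmeasF' w₀) ?_ ?_ ?_
    · exact (hkey.2).differentiableAt
    · -- integrability of F w₀
      have hb : Integrable (fun z : ℝ => Real.exp (n * (‖w₀‖+1)) * z ^ (n + v.re)) μ := by
        apply Integrable.const_mul
        exact (intervalIntegral.intervalIntegrable_rpow' (by linarith)).1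
      apply Integrable.mono hb (hmeasF w₀)
      rw [hμ, MeasureTheory.ae_restrict_iff' measurableSet_Ioc]
      filter_upwards with z hz
      rw [hnormF w₀ z hz]
      have hz' : (0:ℝ) < z := hz.1
      have h1 : n * (w₀.re * (1 - z)) ≤ n * (‖w₀‖ + 1) := by
        apply mul_le_mul_of_nonneg_left _ (le_of_lt hn)
        have h2 : w₀.re * (1 - z) ≤ |w₀.re| * |1 - z| := by
          calc w₀.re * (1 - z) ≤ |w₀.re * (1 - z)| := le_abs_self _
          _ = |w₀.re| * |1 - z| := abs_mul _ _
        have h3 : |1 - z| ≤ 1 := by rw [abs_le]; constructor <;> [linarith [hz.2]; linarith]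
        have h4 : |w₀.re| ≤ ‖w₀‖ := Complex.abs_re_le_norm w₀
        nlinarith [abs_nonneg w₀.re, norm_nonneg w₀]
      have hrp : (0:ℝ) ≤ z ^ (n + v.re) := Real.rpow_nonneg hz'.le _
      rw [Real.norm_eq_abs, abs_of_nonneg (by positivity)]
      exact mul_le_mul_of_nonneg_right (Real.exp_le_exp.2 h1) hrp
    · -- bound on F'
      rw [hμ, MeasureTheory.ae_restrict_iff' measurableSet_Ioc]
      filter_upwards with z hz
      intro w hw
      have hz' := hz.1
      have hnorm' : ‖w‖ ≤ ‖w₀‖ + 1 := by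
        have hd := mem_ball_iff_norm.1 hw
        calc ‖w‖ = ‖w₀ + (w - w₀)‖ := by ring_nf
        _ ≤ ‖w₀‖ + ‖w - w₀‖ := norm_add_le _ _
        _ ≤ ‖w₀‖ + 1 := by linarith
      have h1 : n * (w.re * (1 - z)) ≤ n * (‖w₀‖ + 1) := by
        apply mul_le_mul_of_nonneg_left _ hn.le
        have h2 : w.re * (1 - z) ≤ |w.re| * |1 - z| := by
          calc w.re * (1 - z) ≤ |w.re * (1 - z)| := le_abs_self _
          _ = |w.re| * |1 - z| := abs_mul _ _
        have h3 : |1 - z| ≤ 1 := by rw [abs_le]; constructor <;> [linarith [hz.2]; linarith]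
        have h4 : |w.re| ≤ ‖w‖ := Complex.abs_re_le_norm w
        nlinarith [abs_nonneg w.re, norm_nonneg w]
      have hFeq : ‖F' w z‖ = (n * (1 - z)) * (Real.exp (n * (w.re * (1 - z))) * z ^ (n + v.re)) := by
        simp only [hF']
        rw [norm_mul, hnormF w z hz]
        congr 1
        have hcast : (n:ℂ) * (1 - (z:ℂ)) = ((n * (1 - z) : ℝ) : ℂ) := by push_cast; ring
        rw [hcast, Complex.norm_real, Real.norm_eq_abs, abs_of_nonneg (by nlinarith [hz.2])]
      rw [hFeq, hB]
      have hrp : (0:ℝ) ≤ z ^ (n + v.re) := Real.rpow_nonneg hz'.le _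
      have hle : n * (1-z) ≤ n := by nlinarith
      calc (n * (1 - z)) * (Real.exp (n * (w.re * (1 - z))) * z ^ (n + v.re))
          ≤ n * (Real.exp (n * (‖w₀‖ + 1)) * z ^ (n + v.re)) :=
            mul_le_mul hle (mul_le_mul_of_nonneg_right (Real.exp_le_exp.2 h1) hrp)
              (by positivity) hn.le
        _ = n * Real.exp (n * (‖w₀‖ + 1)) * z ^ (n + v.re) := by ring
    · exact Integrable.const_mul ((intervalIntegral.intervalIntegrable_rpow' (by linarith)).1) B
    · rw [hμ, MeasureTheory.ae_restrict_iff' measurableSet_Ioc]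
      filter_upwards with z hz
      intro w _
      exact hderiv z hz w
  -- conclude
  have hSfun : (fun w : ℂ => Sfun n w v) = fun w => 1 + (n:ℂ) * w * ∫ z, F w z ∂μ := by
    funext w
    rw [Sfun, intervalIntegral.integral_of_le (by norm_num : (0:ℝ) ≤ 1)]
  rw [hSfun]
  apply Differentiable.add (differentiable_const _)
  exact ((differentiable_const _).mul differentiable_id).mul hdiff

/-- Lemma 3.1. For integers `n ≥ 1`, `v` with `n+v ≥ 0` and nonzero `w ∈ ℂ`,
`e^{nw} − Σ_{j=0}^{n+v-1} (nw)^j/j! = ((nw)^{n+v}/(n+v)!) · (1 + nw ∫₀¹ e^{n(w(1-z)+log z)} z^v dz)`,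
and moreover for every real `n > 0` and `v ∈ ℂ` with `Re(n+v) > -1` the extension
`w ↦ S_n(w; v)` is an entire function of `w`. -/
theorem Sfun_eq_and_entire :
    (∀ (n : ℕ) (v : ℤ) (w : ℂ), 1 ≤ n → 0 ≤ (n : ℤ) + v → w ≠ 0 →
      Complex.exp ((n:ℂ) * w) -
          ∑ j ∈ Finset.range ((n : ℤ) + v).toNat, ((n:ℂ) * w) ^ j / (Nat.factorial j : ℂ) =
        ((n:ℂ) * w) ^ (((n : ℤ) + v).toNat) / (Nat.factorial (((n : ℤ) + v).toNat) : ℂ) *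
          Sfun (n : ℝ) w ((v : ℤ) : ℂ)) ∧
    (∀ (n : ℝ) (v : ℂ), 0 < n → -1 < n + v.re → Differentiable ℂ (fun w : ℂ => Sfun n w v)) :=
  ⟨part_one, part_two⟩
end

section
/- Let w, v ∈ ℂ with Re(w) ≥ 1. Then as real n → ∞, T_n(w;v) = −1 + n w ∫_{1}^{3/2} e^{n·p(w;z)} z^v dz + O(e^{−n/30}), for an implied constant depending only on w and v. -/
open Filter Asymptotics MeasureTheory Set Complex

/-- Scaled real Gamma-integrand integrability. -/
lemma integrableOn_exp_neg_mul_rpow {c s : ℝ} (hc : 0 < c) (hs : 0 < s) :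
    IntegrableOn (fun t : ℝ => Real.exp (-(c * t)) * t ^ (s - 1)) (Ioi 0) := by
  have h := Real.GammaIntegral_convergent hs
  rw [show (0:ℝ) = c * 0 by ring, ← integrableOn_Ioi_comp_mul_left_iff _ _ hc] at h
  have h2 : IntegrableOn (fun x : ℝ => (c ^ (s-1))⁻¹ * (Real.exp (-(c * x)) * (c * x) ^ (s - 1))) (Ioi 0) :=
    h.const_mul _
  refine h2.congr_fun (fun t ht => ?_) measurableSet_Ioi
  rw [mem_Ioi] at ht
  beta_reduce
  rw [Real.mul_rpow hc.le ht.le]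
  field_simp [(Real.rpow_pos_of_pos hc (s-1)).ne']

/-- Integrability of the complex Gamma-integrand with complex scale. -/
lemma integrableOn_cpow_mul_cexp {a w : ℂ} (ha : 0 < a.re) (hw : 0 < w.re) :
    IntegrableOn (fun t : ℝ => (t : ℂ) ^ (a - 1) * Complex.exp (-(w * t))) (Ioi 0) := by
  refine ((integrableOn_exp_neg_mul_rpow hw ha).mono' ?_ ?_)
  · refine (ContinuousOn.mul ?_ ?_).aestronglyMeasurable measurableSet_Ioi
    · exact fun t ht => (Complex.continuousAt_ofReal_cpow_const _ _
        (Or.inr (ne_of_gt ht))).continuousWithinAt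
    · exact (Complex.continuous_exp.comp (by continuity)).continuousOn
  · rw [ae_restrict_iff' measurableSet_Ioi]
    refine Filter.Eventually.of_forall (fun t ht => ?_)
    rw [mem_Ioi] at ht
    rw [norm_mul,
      Complex.norm_cpow_eq_rpow_re_of_pos ht, Complex.norm_exp]
    have : (-(w * ↑t)).re = -(w.re * t) := by simp
    rw [this, sub_re, one_re, mul_comm]

/-- The rotated Gamma integral: `∫₀^∞ t^(a-1) e^{-wt} dt = e^{-a Log w} Γ(a)` for `Re w > 0`. -/
lemma integral_cpow_mul_cexp_neg {a : ℂ} (ha : 0 < a.re) :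
    ∀ w : ℂ, 0 < w.re →
      ∫ t : ℝ in Ioi 0, (t : ℂ) ^ (a - 1) * Complex.exp (-(w * t))
        = Complex.exp (-(a * Complex.log w)) * Complex.Gamma a := by
  set U : Set ℂ := {z : ℂ | 0 < z.re} with hU
  have hUopen : IsOpen U := isOpen_lt continuous_const Complex.continuous_re
  set f : ℂ → ℂ := fun w => ∫ t : ℝ in Ioi 0, (t : ℂ) ^ (a - 1) * Complex.exp (-(w * t)) with hf
  set g : ℂ → ℂ := fun w => Complex.exp (-(a * Complex.log w)) * Complex.Gamma a with hg
  suffices h : EqOn f g U by exact fun w hw => h hw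
  have hmeas : ∀ w : ℂ, AEStronglyMeasurable (fun t : ℝ => (t : ℂ) ^ (a - 1) * Complex.exp (-(w * t)))
      (volume.restrict (Ioi 0)) := by
    intro w
    refine (ContinuousOn.mul ?_ ?_).aestronglyMeasurable measurableSet_Ioi
    · exact fun t ht => (Complex.continuousAt_ofReal_cpow_const _ _
        (Or.inr (ne_of_gt ht))).continuousWithinAt
    · exact (Complex.continuous_exp.comp (by continuity)).continuousOn
  have hfdiff : DifferentiableOn ℂ f U := by
    intro w₀ hw₀
    have hre : 0 < w₀.re := hw₀
    set ε : ℝ := w₀.re / 2 with hε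
    have hεpos : 0 < ε := by positivity
    have key := hasDerivAt_integral_of_dominated_loc_of_deriv_le (μ := volume.restrict (Ioi 0))
      (F := fun (w : ℂ) (t : ℝ) => (t : ℂ) ^ (a - 1) * Complex.exp (-(w * t)))
      (F' := fun (w : ℂ) (t : ℝ) => (t : ℂ) ^ (a - 1) * (Complex.exp (-(w * t)) * -(t : ℂ)))
      (x₀ := w₀) (bound := fun t : ℝ => Real.exp (-(ε * t)) * t ^ ((a.re + 1) - 1))
      (Metric.ball_mem_nhds w₀ hεpos) (Filter.Eventually.of_forall hmeas) (integrableOn_cpow_mul_cexp ha hre) ?_ ?_ ?_ ?_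
    · exact (key.2.differentiableAt).differentiableWithinAt
    · -- measurability of F' w₀
      refine (ContinuousOn.mul ?_ ?_).aestronglyMeasurable measurableSet_Ioi
      · exact fun t ht => (Complex.continuousAt_ofReal_cpow_const _ _
          (Or.inr (ne_of_gt ht))).continuousWithinAt
      · exact ((Complex.continuous_exp.comp (by continuity)).mul (by continuity)).continuousOn
    · -- bound
      rw [ae_restrict_iff' measurableSet_Ioi]
      refine Filter.Eventually.of_forall (fun t ht w hwball => ?_)
      rw [mem_Ioi] at ht
      have hwre : ε ≤ w.re := by
        have h1 : ‖w - w₀‖ < ε := by simpa [Metric.mem_ball, dist_eq_norm] using hwball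
        have h2 : |(w - w₀).re| ≤ ‖w - w₀‖ := Complex.abs_re_le_norm _
        rw [Complex.sub_re] at h2
        have := abs_le.1 h2
        have : -(ε) ≤ w.re - w₀.re := by linarith [this.1]
        simp only [hε] at this ⊢
        linarith
      rw [norm_mul, norm_mul, norm_neg,
        Complex.norm_cpow_eq_rpow_re_of_pos ht, Complex.norm_exp,
        Complex.norm_real, Real.norm_eq_abs, abs_of_pos ht]
      have hre2 : (-(w * ↑t)).re = -(w.re * t) := by simp
      rw [hre2, sub_re, one_re]
      have h3 : Real.exp (-(w.re * t)) ≤ Real.exp (-(ε * t)) := by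
        apply Real.exp_le_exp.2
        have := mul_le_mul_of_nonneg_right hwre ht.le
        linarith
      calc t ^ (a.re - 1) * (Real.exp (-(w.re * t)) * t)
          ≤ t ^ (a.re - 1) * (Real.exp (-(ε * t)) * t) := by
            apply mul_le_mul_of_nonneg_left _ (Real.rpow_nonneg ht.le _)
            exact mul_le_mul_of_nonneg_right h3 ht.le
        _ = Real.exp (-(ε * t)) * t ^ ((a.re + 1) - 1) := by
            rw [show (a.re + 1) - 1 = (a.re - 1) + 1 by ring, Real.rpow_add ht,
              Real.rpow_one]
            ring
    · exact integrableOn_exp_neg_mul_rpow hεpos (by positivity)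
    · -- differentiability of integrand
      rw [ae_restrict_iff' measurableSet_Ioi]
      refine Filter.Eventually.of_forall (fun t ht w hwball => ?_)
      have h1 : HasDerivAt (fun w : ℂ => -(w * t)) (-(t : ℂ)) w := by
        exact (((hasDerivAt_id' w).mul_const (t : ℂ)).neg).congr_deriv (by ring)
      have h2 := h1.cexp
      simpa [mul_comm] using h2.const_mul ((t : ℂ) ^ (a - 1))
  have hgdiff : DifferentiableOn ℂ g U := by
    intro w hw
    have hslit : w ∈ Complex.slitPlane := Or.inl hw
    exact ((((Complex.differentiableAt_log hslit).const_mul a).neg.cexp).mul_const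
      _).differentiableWithinAt
  refine (hfdiff.analyticOnNhd hUopen).eqOn_of_preconnected_of_frequently_eq
    (hgdiff.analyticOnNhd hUopen) ((convex_halfSpace_re_gt 0).isPreconnected)
    (show (1:ℂ) ∈ U by simp [hU]) ?_
  -- frequently equal near 1
  set u : ℕ → ℂ := fun n => ((1 + ((n:ℝ) + 1)⁻¹ : ℝ) : ℂ) with hu
  have htend : Filter.Tendsto u atTop (nhdsWithin 1 {(1:ℂ)}ᶜ) := by
    apply tendsto_nhdsWithin_of_tendsto_nhds_of_eventually_within
    · have : Filter.Tendsto (fun n : ℕ => (1 + ((n:ℝ) + 1)⁻¹ : ℝ)) atTop (nhds 1) := by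
        have := tendsto_one_div_add_atTop_nhds_zero_nat (𝕜 := ℝ)
        simp only [one_div] at this
        simpa using tendsto_const_nhds.add this
      have h2 := (Complex.continuous_ofReal.tendsto (1:ℝ)).comp this
      rw [Complex.ofReal_one] at h2; exact h2
    · refine Filter.Eventually.of_forall (fun n => ?_)
      simp only [hu, mem_compl_iff, mem_singleton_iff]
      intro hcon
      have : (1 + ((n:ℝ) + 1)⁻¹ : ℝ) = 1 := by exact_mod_cast hcon
      have hpos : (0:ℝ) < ((n:ℝ) + 1)⁻¹ := by positivity
      linarith
  refine htend.frequently (Filter.Frequently.of_forall (fun n => ?_))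
  -- equality at real points
  set r : ℝ := 1 + ((n:ℝ) + 1)⁻¹ with hr
  have hrpos : 0 < r := by positivity
  have hbase := integral_cpow_mul_exp_neg_mul_Ioi ha hrpos
  have hfr : f (u n) = (1 / (r:ℂ)) ^ a * Complex.Gamma a := hbase
  rw [hfr]
  have harg : ((r:ℂ)).arg ≠ Real.pi := by
    rw [Complex.arg_ofReal_of_nonneg hrpos.le]
    exact (Real.pi_pos.ne)
  have h0 : (1 / (r:ℂ)) ≠ 0 := by
    simp [Complex.ofReal_ne_zero, hrpos.ne']
  rw [Complex.cpow_def_of_ne_zero h0, one_div, Complex.log_inv _ harg]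
  simp only [hg, hu]
  congr 1
  rw [hr]
  ring_nf

/-- Pointwise integrand identity. -/
lemma integrand_eq {n : ℝ} (hn : 0 < n) {w v : ℂ} {t : ℝ} (ht : 0 < t) :
    Complex.exp ((n : ℂ) * (w * (1 - (t:ℂ)) + (Real.log t : ℂ))) * (t:ℂ) ^ v
      = Complex.exp ((n:ℂ) * w) *
        ((t : ℂ) ^ (((n:ℂ) + v + 1) - 1) * Complex.exp (-(((n:ℂ) * w) * t))) := by
  have ht0 : (t : ℂ) ≠ 0 := Complex.ofReal_ne_zero.2 ht.ne'
  have h1 : ((n:ℂ) + v + 1) - 1 = (n:ℂ) + v := by ring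
  rw [h1, Complex.cpow_add _ _ ht0]
  have h2 : (t : ℂ) ^ (n : ℂ) = Complex.exp ((n:ℂ) * (Real.log t : ℂ)) := by
    rw [show ((n:ℂ) * (Real.log t : ℂ)) = ((n * Real.log t : ℝ) : ℂ) by push_cast; ring,
      ← Complex.ofReal_exp, mul_comm n, ← Real.rpow_def_of_pos ht,
      Complex.ofReal_cpow ht.le]
  rw [h2]
  rw [show Complex.exp ((n:ℂ)*w) * (Complex.exp ((n:ℂ)*(Real.log t:ℂ)) * (t:ℂ)^v *
        Complex.exp (-((n:ℂ)*w*(t:ℂ))))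
      = Complex.exp ((n:ℂ)*w + (n:ℂ)*(Real.log t:ℂ) + -((n:ℂ)*w*(t:ℂ))) * (t:ℂ)^v by
    rw [Complex.exp_add, Complex.exp_add]; ring]
  congr 2
  ring

/-- Integrability of the full integrand on `Ioi 0`. -/
lemma integrableOn_main {n : ℝ} (hn : 0 < n) {w v : ℂ} (hw : 0 < w.re)
    (hnv : 0 < n + v.re + 1) :
    IntegrableOn (fun z : ℝ =>
      Complex.exp ((n : ℂ) * (w * (1 - (z:ℂ)) + (Real.log z : ℂ))) * (z:ℂ) ^ v) (Ioi 0) := by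
  have ha : 0 < ((n:ℂ) + v + 1).re := by
    simpa using hnv
  have hwre : 0 < ((n:ℂ) * w).re := by
    have : ((n:ℂ) * w).re = n * w.re := by simp
    rw [this]; positivity
  have h : IntegrableOn (fun x : ℝ => Complex.exp ((n:ℂ)*w) *
      ((x:ℂ) ^ (((n:ℂ)+v+1)-1) * Complex.exp (-(((n:ℂ)*w)*(x:ℂ))))) (Ioi 0) :=
    (integrableOn_cpow_mul_cexp ha hwre).const_mul _
  exact h.congr_fun (fun t ht => (integrand_eq hn (mem_Ioi.1 ht)).symm) measurableSet_Ioi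

/-- Main identity: the Gamma term equals `nw` times the full integral over `(0, ∞)`. -/
lemma gamma_term_eq {n : ℝ} (hn : 0 < n) {w v : ℂ} (hw : 0 < w.re)
    (hnv : 0 < n + v.re + 1) :
    Complex.exp ((n : ℂ) * w) *
        Complex.exp (-(((n : ℂ) + v) * ((Real.log n : ℂ) + Complex.log w))) *
        Complex.Gamma ((n : ℂ) + v + 1)
      = (n : ℂ) * w * ∫ z : ℝ in Ioi 0,
          Complex.exp ((n : ℂ) * (w * (1 - (z:ℂ)) + (Real.log z : ℂ))) * (z:ℂ) ^ v := by
  have hw0 : w ≠ 0 := fun h => by simp [h] at hw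
  have ha : 0 < ((n:ℂ) + v + 1).re := by simpa using hnv
  have hwre : 0 < ((n:ℂ) * w).re := by
    have : ((n:ℂ) * w).re = n * w.re := by simp
    rw [this]; positivity
  have hval := integral_cpow_mul_cexp_neg ha ((n:ℂ) * w) hwre
  have hcong : (∫ z : ℝ in Ioi 0,
        Complex.exp ((n : ℂ) * (w * (1 - (z:ℂ)) + (Real.log z : ℂ))) * (z:ℂ) ^ v)
      = Complex.exp ((n:ℂ)*w) * ∫ t : ℝ in Ioi 0,
          (t : ℂ) ^ (((n:ℂ) + v + 1) - 1) * Complex.exp (-(((n:ℂ) * w) * t)) := by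
    rw [← integral_const_mul]
    exact setIntegral_congr_fun measurableSet_Ioi (fun t ht => integrand_eq hn (mem_Ioi.1 ht))
  rw [hcong, hval]
  have hlog : Complex.log ((n:ℂ) * w) = (Real.log n : ℂ) + Complex.log w := by
    exact_mod_cast Complex.log_ofReal_mul hn hw0
  rw [hlog]
  set L : ℂ := (Real.log n : ℂ) + Complex.log w with hL
  have hexpL : Complex.exp L = (n:ℂ) * w := by
    rw [hL, Complex.exp_add, Complex.exp_log hw0]
    congr 1
    rw [← Complex.ofReal_exp, Real.exp_log hn]
  have hsplit : Complex.exp (-(((n:ℂ) + v + 1) * L))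
      = Complex.exp (-(((n:ℂ) + v) * L)) * (Complex.exp L)⁻¹ := by
    rw [← Complex.exp_neg, ← Complex.exp_add]
    congr 1
    ring
  rw [hsplit, hexpL]
  have hnw0 : (n:ℂ) * w ≠ 0 := by
    simp [Complex.ofReal_ne_zero, hn.ne', hw0]
  have hnc : (n:ℂ) ≠ 0 := Complex.ofReal_ne_zero.2 hn.ne'
  field_simp

lemma log_three_halves_le : Real.log (3/2 : ℝ) ≤ 23/50 := by
  rw [Real.log_le_iff_le_exp (by norm_num)]
  have h1 : (1 + 23/100 : ℝ) ≤ Real.exp (23/100) := by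
    have := Real.add_one_le_exp (23/100 : ℝ); linarith
  have h2 : Real.exp (23/50 : ℝ) = Real.exp (23/100) * Real.exp (23/100) := by
    rw [← Real.exp_add]; norm_num
  nlinarith [Real.exp_pos (23/100 : ℝ)]

lemma norm_G {n : ℝ} {w v : ℂ} {z : ℝ} (hz : 0 < z) :
    ‖Complex.exp ((n : ℂ) * (w * (1 - (z:ℂ)) + (Real.log z : ℂ))) * (z:ℂ) ^ v‖
      = Real.exp (n * (w.re * (1 - z) + Real.log z)) * z ^ v.re := by
  rw [norm_mul, Complex.norm_exp,
    Complex.norm_cpow_eq_rpow_re_of_pos hz]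
  congr 2
  simp [Complex.mul_re, Complex.add_re, Complex.sub_re, Complex.mul_im, Complex.add_im,
    Complex.sub_im]

/-- Lemma 3.2, second part. For `Re(w) ≥ 1`,
`T_n(w;v) = -1 + nw ∫_1^{3/2} e^{n·p(w;z)} z^v dz + O(e^{-n/30})` as real `n → ∞`. -/
theorem Tfun_truncated_integral (w v : ℂ) (hw : 1 ≤ w.re) :
    (fun n : ℝ => Tfun n w v -
        (-1 + (n:ℂ) * w *
          ∫ z in (1:ℝ)..(3/2),
            Complex.exp ((n:ℂ) * (w * (1 - (z:ℂ)) + (Real.log z : ℂ))) * (z:ℂ) ^ v))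
      =O[atTop] (fun n : ℝ => Real.exp (-n / 30)) := by
  have hw0 : 0 < w.re := lt_of_lt_of_le one_pos hw
  set M : ℝ := max v.re 0 with hM
  have hM0 : 0 ≤ M := le_max_right _ _
  have hMv : v.re ≤ M := le_max_left _ _
  have hbase_int : IntegrableOn (fun z : ℝ => Real.exp (1 - z) * z ^ (M + 1)) (Ioi 0) := by
    have h : IntegrableOn (fun z : ℝ => Real.exp 1 * (Real.exp (-z) * z ^ ((M+2) - 1)))
        (Ioi 0) :=
      (Real.GammaIntegral_convergent (show (0:ℝ) < M + 2 by linarith)).const_mul _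
    refine h.congr_fun (fun z hz => ?_) measurableSet_Ioi
    beta_reduce
    rw [show (M + 2) - 1 = M + 1 by ring, ← mul_assoc, ← Real.exp_add,
      show (1:ℝ) + -z = 1 - z from by ring]
  set C0 : ℝ := ∫ z in Ioi (0:ℝ), Real.exp (1 - z) * z ^ (M + 1) with hC0
  have hC0nn : 0 ≤ C0 := setIntegral_nonneg measurableSet_Ioi
    (fun z hz => by have h0 : (0:ℝ) < z := hz; positivity)
  rw [isBigO_iff]
  refine ⟨‖w‖ * Real.exp (1/25) * C0 * 150, ?_⟩
  filter_upwards [eventually_ge_atTop (max 1 (-v.re))] with n hn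
  have hn1 : 1 ≤ n := le_trans (le_max_left _ _) hn
  have hn0 : 0 < n := lt_of_lt_of_le one_pos hn1
  have hnv : 0 < n + v.re + 1 := by
    have := le_trans (le_max_right 1 (-v.re)) hn; linarith
  have hint : IntegrableOn (fun z : ℝ =>
      Complex.exp ((n : ℂ) * (w * (1 - (z:ℂ)) + (Real.log z : ℂ))) * (z:ℂ) ^ v) (Ioi 0) :=
    integrableOn_main hn0 hw0 hnv
  -- the exact identity
  have hsplit1 : (∫ z in Ioi (0:ℝ),
        Complex.exp ((n : ℂ) * (w * (1 - (z:ℂ)) + (Real.log z : ℂ))) * (z:ℂ) ^ v)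
      = (∫ z in Ioc (0:ℝ) 1,
          Complex.exp ((n : ℂ) * (w * (1 - (z:ℂ)) + (Real.log z : ℂ))) * (z:ℂ) ^ v)
        + ∫ z in Ioi (1:ℝ),
            Complex.exp ((n : ℂ) * (w * (1 - (z:ℂ)) + (Real.log z : ℂ))) * (z:ℂ) ^ v := by
    rw [← setIntegral_union (Ioc_disjoint_Ioi le_rfl) measurableSet_Ioi
      (hint.mono_set Ioc_subset_Ioi_self) (hint.mono_set (Ioi_subset_Ioi (by norm_num))),
      Ioc_union_Ioi_eq_Ioi (by norm_num : (0:ℝ) ≤ 1)]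
  have hsplit2 : (∫ z in Ioi (1:ℝ),
        Complex.exp ((n : ℂ) * (w * (1 - (z:ℂ)) + (Real.log z : ℂ))) * (z:ℂ) ^ v)
      = (∫ z in Ioc (1:ℝ) (3/2),
          Complex.exp ((n : ℂ) * (w * (1 - (z:ℂ)) + (Real.log z : ℂ))) * (z:ℂ) ^ v)
        + ∫ z in Ioi (3/2:ℝ),
            Complex.exp ((n : ℂ) * (w * (1 - (z:ℂ)) + (Real.log z : ℂ))) * (z:ℂ) ^ v := by
    rw [← setIntegral_union (Ioc_disjoint_Ioi le_rfl) measurableSet_Ioi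
      (hint.mono_set (fun x hx => lt_trans (by norm_num) hx.1))
      (hint.mono_set (Ioi_subset_Ioi (by norm_num))),
      Ioc_union_Ioi_eq_Ioi (by norm_num : (1:ℝ) ≤ 3/2)]
  have hkey : Tfun n w v -
      (-1 + (n:ℂ) * w *
        ∫ z in (1:ℝ)..(3/2),
          Complex.exp ((n:ℂ) * (w * (1 - (z:ℂ)) + (Real.log z : ℂ))) * (z:ℂ) ^ v)
      = (n:ℂ) * w * ∫ z in Ioi (3/2:ℝ),
          Complex.exp ((n:ℂ) * (w * (1 - (z:ℂ)) + (Real.log z : ℂ))) * (z:ℂ) ^ v := by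
    rw [Tfun, Sfun, gamma_term_eq hn0 hw0 hnv,
      intervalIntegral.integral_of_le (by norm_num : (0:ℝ) ≤ 1),
      intervalIntegral.integral_of_le (by norm_num : (1:ℝ) ≤ 3/2),
      hsplit1, hsplit2]
    ring
  rw [hkey]
  -- pointwise bound on the tail
  have hptwise : ∀ z ∈ Ioi (3/2 : ℝ),
      ‖Complex.exp ((n:ℂ) * (w * (1 - (z:ℂ)) + (Real.log z : ℂ))) * (z:ℂ) ^ v‖
        ≤ Real.exp (1/25) * Real.exp (-(n/25)) * (Real.exp (1 - z) * z ^ (M + 1)) := by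
    intro z hz
    rw [mem_Ioi] at hz
    have hz0 : 0 < z := by linarith
    have hz1 : 1 ≤ z := by linarith
    rw [norm_G hz0]
    have hlog32 : Real.log z ≤ Real.log (3/2) + (z - 3/2) := by
      have h1 : Real.log z - Real.log (3/2) = Real.log (z / (3/2)) := by
        rw [Real.log_div hz0.ne' (by norm_num)]
      have h2 : Real.log (z / (3/2)) ≤ z / (3/2) - 1 :=
        Real.log_le_sub_one_of_pos (by positivity)
      have h3 : z / (3/2) - 1 ≤ z - 3/2 := by linarith
      linarith
    have hf : (1 - z) + Real.log z ≤ -(1/25) := by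
      have := log_three_halves_le; linarith
    have hfz : w.re * (1 - z) + Real.log z ≤ (1 - z) + Real.log z := by
      nlinarith
    have harg : n * (w.re * (1 - z) + Real.log z)
        ≤ 1/25 + -(n/25) + ((1 - z) + Real.log z) := by
      nlinarith [mul_le_mul_of_nonneg_left hfz (by linarith : (0:ℝ) ≤ n),
        mul_le_mul_of_nonneg_left hf (by linarith : (0:ℝ) ≤ n - 1)]
    have hexp1 : Real.exp (n * (w.re * (1 - z) + Real.log z))
        ≤ Real.exp (1/25) * Real.exp (-(n/25)) * (Real.exp (1 - z) * z) := by
      have h4 : Real.exp (1/25) * Real.exp (-(n/25)) * (Real.exp (1 - z) * z)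
          = Real.exp (1/25 + -(n/25) + ((1 - z) + Real.log z)) := by
        rw [Real.exp_add, Real.exp_add, Real.exp_add, Real.exp_log hz0]
      rw [h4]
      exact Real.exp_le_exp.2 harg
    have hpow : z ^ v.re ≤ z ^ M := Real.rpow_le_rpow_of_exponent_le hz1 hMv
    calc Real.exp (n * (w.re * (1 - z) + Real.log z)) * z ^ v.re
        ≤ (Real.exp (1/25) * Real.exp (-(n/25)) * (Real.exp (1 - z) * z)) * z ^ M := by
          apply mul_le_mul hexp1 hpow (Real.rpow_nonneg hz0.le _) (by positivity)
      _ = Real.exp (1/25) * Real.exp (-(n/25)) * (Real.exp (1 - z) * z ^ (M + 1)) := by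
          rw [Real.rpow_add hz0, Real.rpow_one]
          ring
  -- integrable dominating function on the tail
  have hgint : IntegrableOn (fun z : ℝ =>
      Real.exp (1/25) * Real.exp (-(n/25)) * (Real.exp (1 - z) * z ^ (M + 1))) (Ioi (3/2)) := by
    exact (hbase_int.mono_set (Ioi_subset_Ioi (by norm_num))).const_mul
      (Real.exp (1/25) * Real.exp (-(n/25)))
  have hIbound : ‖∫ z in Ioi (3/2:ℝ),
        Complex.exp ((n:ℂ) * (w * (1 - (z:ℂ)) + (Real.log z : ℂ))) * (z:ℂ) ^ v‖
      ≤ Real.exp (1/25) * Real.exp (-(n/25)) * C0 := by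
    have h1 := norm_integral_le_of_norm_le hgint
      ((ae_restrict_iff' measurableSet_Ioi).2 (Filter.Eventually.of_forall hptwise))
    refine h1.trans ?_
    rw [integral_const_mul]
    apply mul_le_mul_of_nonneg_left _ (by positivity)
    refine setIntegral_mono_set hbase_int ?_ ((Ioi_subset_Ioi (by norm_num)).eventuallyLE)
    rw [Filter.EventuallyLE, ae_restrict_iff' measurableSet_Ioi]
    exact Filter.Eventually.of_forall (fun z hz => by
      have h0 : (0:ℝ) < z := hz; positivity)
  -- final numeric assembly
  rw [norm_mul, norm_mul, Complex.norm_real, Real.norm_eq_abs,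
    abs_of_pos hn0]
  have hn150 : n * Real.exp (-(n/25)) ≤ 150 * Real.exp (-n/30) := by
    have h1 : n / 150 ≤ Real.exp (n / 150) := by
      have := Real.add_one_le_exp (n/150); linarith
    have h2 : Real.exp (n/150) * Real.exp (-(n/25)) = Real.exp (-n/30) := by
      rw [← Real.exp_add]; congr 1; ring
    calc n * Real.exp (-(n/25)) ≤ (150 * Real.exp (n/150)) * Real.exp (-(n/25)) := by
          nlinarith [Real.exp_pos (-(n/25))]
      _ = 150 * Real.exp (-n/30) := by rw [mul_assoc, h2]
  have hnorm_exp : ‖Real.exp (-n/30)‖ = Real.exp (-n/30) := by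
    rw [Real.norm_eq_abs, abs_of_pos (Real.exp_pos _)]
  rw [hnorm_exp]
  calc n * ‖w‖ * ‖∫ z in Ioi (3/2:ℝ),
          Complex.exp ((n:ℂ) * (w * (1 - (z:ℂ)) + (Real.log z : ℂ))) * (z:ℂ) ^ v‖
      ≤ n * ‖w‖ * (Real.exp (1/25) * Real.exp (-(n/25)) * C0) := by
        apply mul_le_mul_of_nonneg_left hIbound (by positivity)
    _ = (‖w‖ * Real.exp (1/25) * C0) * (n * Real.exp (-(n/25))) := by ring
    _ ≤ (‖w‖ * Real.exp (1/25) * C0) * (150 * Real.exp (-n/30)) := by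
        apply mul_le_mul_of_nonneg_left hn150 (by positivity)
    _ = ‖w‖ * Real.exp (1/25) * C0 * 150 * Real.exp (-n/30) := by ring
end

section
/- Let w, v ∈ ℂ with Re(w) ≥ 1 (so in particular |arg w| < π/2), and let n be real and large enough that n + Re(v) + 1 > 0. Then e^{nw} (nw)^{−(n+v)} Γ(n+v+1) = n w ∫₀^∞ e^{n(w(1−z)+log z)} z^v dz, where (nw)^{n+v} = e^{(n+v)(log n + Log w)} with the principal logarithm, and the integral is over the positive real axis. -/
open Filter Asymptotics MeasureTheory

section GammaRotatedAux
open Set Complex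

lemma intAux0 {s b : ℝ} (hs : -1 < s) (hb : 0 < b) :
    IntegrableOn (fun x : ℝ => x ^ s * Real.exp (-(b * x))) (Ioi 0) := by
  have := integrableOn_rpow_mul_exp_neg_mul_rpow hs zero_lt_one hb
  refine this.congr_fun (fun x hx => ?_) measurableSet_Ioi
  dsimp only
  rw [Real.rpow_one, neg_mul]

lemma measAux (a : ℂ) (c : ℂ) :
    AEStronglyMeasurable (fun t : ℝ => (t:ℂ) ^ (a-1) * Complex.exp (-(c * t)))
      (volume.restrict (Ioi 0)) := by
  apply ContinuousOn.aestronglyMeasurable ?_ measurableSet_Ioi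
  intro t ht
  exact ((Complex.continuousAt_ofReal_cpow_const _ _ (Or.inr (ne_of_gt ht))).mul
    (((Complex.continuous_ofReal.continuousAt).const_mul c).neg.cexp)).continuousWithinAt

lemma normAux {a : ℂ} (c : ℂ) {t : ℝ} (ht : 0 < t) :
    ‖(t:ℂ) ^ (a-1) * Complex.exp (-(c * t))‖ = t ^ (a.re - 1) * Real.exp (-(c.re * t)) := by
  rw [norm_mul,
    Complex.norm_cpow_eq_rpow_re_of_pos ht, Complex.norm_exp]
  norm_num [Complex.sub_re]

lemma intAux {a : ℂ} (ha : 0 < a.re) {c : ℂ} (hc : 0 < c.re) :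
    IntegrableOn (fun t : ℝ => (t:ℂ) ^ (a-1) * Complex.exp (-(c * t))) (Ioi 0) := by
  refine ((intAux0 (s := a.re - 1) (by linarith) hc).mono' (measAux a c) ?_)
  rw [ae_restrict_iff' measurableSet_Ioi]
  exact ae_of_all _ fun t ht => le_of_eq (normAux c ht)

lemma diffAux {a : ℂ} (ha : 0 < a.re) {c₀ : ℂ} (hc₀ : 0 < c₀.re) :
    HasDerivAt (fun c : ℂ => ∫ t in Ioi (0:ℝ), (t:ℂ) ^ (a-1) * Complex.exp (-(c * t)))
      (∫ t in Ioi (0:ℝ), (t:ℂ) ^ (a-1) * (Complex.exp (-(c₀ * t)) * (-(t:ℂ)))) c₀ := by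
  set ε : ℝ := c₀.re / 2 with hε
  have hεpos : 0 < ε := by positivity
  have := hasDerivAt_integral_of_dominated_loc_of_deriv_le (μ := volume.restrict (Ioi 0))
    (F := fun (c : ℂ) (t : ℝ) => (t:ℂ) ^ (a-1) * Complex.exp (-(c * t)))
    (F' := fun (c : ℂ) (t : ℝ) => (t:ℂ) ^ (a-1) * (Complex.exp (-(c * t)) * (-(t:ℂ))))
    (x₀ := c₀) (bound := fun t : ℝ => t ^ a.re * Real.exp (-(ε * t))) (Metric.ball_mem_nhds c₀ hεpos)
    (Eventually.of_forall fun c => measAux a c) (intAux ha hc₀) ?_ ?_ ?_ ?_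
  · exact this.2
  · -- measurability of F' c₀
    apply ContinuousOn.aestronglyMeasurable ?_ measurableSet_Ioi
    intro t ht
    exact ((Complex.continuousAt_ofReal_cpow_const _ _ (Or.inr (ne_of_gt ht))).mul
      ((((Complex.continuous_ofReal.continuousAt).const_mul c₀).neg.cexp).mul
        (Complex.continuous_ofReal.continuousAt.neg))).continuousWithinAt
  · -- bound
    rw [ae_restrict_iff' measurableSet_Ioi]
    refine ae_of_all _ fun t ht => ?_
    intro x hx
    have hxre : ε ≤ x.re := by
      have h1 : |(x - c₀).re| ≤ ‖x - c₀‖ := Complex.abs_re_le_norm _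
      have h2 : ‖x - c₀‖ < ε := by simpa [Metric.mem_ball, dist_eq_norm] using hx
      have := abs_le.1 h1
      have : -(ε) ≤ (x - c₀).re := by linarith [this.1]
      simp only [Complex.sub_re] at this
      simp only [hε] at *
      linarith
    rw [norm_mul, norm_mul,
      Complex.norm_cpow_eq_rpow_re_of_pos ht, Complex.norm_exp]
    have habs : ‖(-(t:ℂ))‖ = t := by
      simp [abs_of_pos (mem_Ioi.1 ht), (mem_Ioi.1 ht).le]
    rw [habs]
    have ht' : (0:ℝ) < t := ht
    have h1 : t ^ (a-1).re * (Real.exp ((-(x * t)).re) * t)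
        = t ^ a.re * Real.exp (-(x.re * t)) := by
      rw [show (a-1).re = a.re - 1 by simp [Complex.sub_re]]
      have hre : (-(x * (t:ℂ))).re = -(x.re * t) := by
        simp [Complex.mul_re]
      rw [hre]
      calc t ^ (a.re - 1) * (Real.exp (-(x.re * t)) * t)
          = t ^ (a.re - 1) * t * Real.exp (-(x.re * t)) := by ring
        _ = t ^ a.re * Real.exp (-(x.re * t)) := by
            rw [← Real.rpow_add_one ht'.ne', sub_add_cancel]
    rw [h1]
    have hexp : Real.exp (-(x.re * t)) ≤ Real.exp (-(ε * t)) := by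
      apply Real.exp_le_exp.2
      nlinarith
    have hpow : (0:ℝ) ≤ t ^ a.re := Real.rpow_nonneg ht'.le _
    exact mul_le_mul_of_nonneg_left hexp hpow
  · -- bound integrable
    exact intAux0 (by linarith) hεpos
  · -- differentiability
    refine ae_of_all _ fun t => fun x _ => ?_
    have h1 : HasDerivAt (fun c : ℂ => -(c * (t:ℂ))) (-(t:ℂ)) x :=
      (hasDerivAt_mul_const (t:ℂ)).neg
    exact (h1.cexp).const_mul _

lemma gamma_rotated {a : ℂ} (ha : 0 < a.re) {c : ℂ} (hc : 0 < c.re) :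
    ∫ t in Ioi (0:ℝ), (t:ℂ) ^ (a-1) * Complex.exp (-(c * t))
      = c ^ (-a) * Complex.Gamma a := by
  set U : Set ℂ := {z : ℂ | 0 < z.re} with hU
  have hUopen : IsOpen U := isOpen_lt continuous_const Complex.continuous_re
  have hUconn : IsPreconnected U := (convex_halfSpace_re_gt 0).isPreconnected
  set f : ℂ → ℂ := fun c => ∫ t in Ioi (0:ℝ), (t:ℂ) ^ (a-1) * Complex.exp (-(c * t)) with hf
  set g : ℂ → ℂ := fun c => c ^ (-a) * Complex.Gamma a with hg
  have hfa : AnalyticOnNhd ℂ f U := by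
    apply DifferentiableOn.analyticOnNhd ?_ hUopen
    intro z hz
    exact (diffAux ha hz).differentiableAt.differentiableWithinAt
  have hga : AnalyticOnNhd ℂ g U := by
    apply DifferentiableOn.analyticOnNhd ?_ hUopen
    intro z hz
    refine DifferentiableAt.differentiableWithinAt ?_
    exact ((differentiableAt_id.cpow (differentiableAt_const _)
      (Complex.mem_slitPlane_iff.2 (Or.inl hz)))).mul_const _
  have h1U : (1:ℂ) ∈ U := by simp [hU]
  have hfreq : ∃ᶠ z in nhdsWithin (1:ℂ) {(1:ℂ)}ᶜ, f z = g z := by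
    have htend : Tendsto (fun k : ℕ => ((1 + ((k:ℝ)+1)⁻¹ : ℝ) : ℂ)) atTop
        (nhdsWithin (1:ℂ) {(1:ℂ)}ᶜ) := by
      rw [tendsto_nhdsWithin_iff]
      constructor
      · have h0 : Tendsto (fun k : ℕ => ((k:ℝ)+1)⁻¹) atTop (nhds 0) := by
          simpa [one_div] using tendsto_one_div_add_atTop_nhds_zero_nat (𝕜 := ℝ)
        have h1 : Tendsto (fun k : ℕ => (1 + ((k:ℝ)+1)⁻¹ : ℝ)) atTop (nhds (1+0)) :=
          tendsto_const_nhds.add h0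
        rw [add_zero] at h1
        have := (Complex.continuous_ofReal.tendsto 1).comp h1
        simpa [Function.comp_def] using this
      · refine Eventually.of_forall fun k => ?_
        simp only [Set.mem_compl_iff, Set.mem_singleton_iff]
        intro h
        have : (1 + ((k:ℝ)+1)⁻¹ : ℝ) = 1 := by exact_mod_cast h
        have hk : (0:ℝ) < ((k:ℝ)+1)⁻¹ := by positivity
        linarith
    refine htend.frequently (Eventually.of_forall fun k => ?_).frequently
    set r : ℝ := 1 + ((k:ℝ)+1)⁻¹ with hr
    have hrpos : 0 < r := by positivity
    have := Complex.integral_cpow_mul_exp_neg_mul_Ioi ha hrpos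
    simp only [hf, hg]
    rw [this]
    congr 1
    have harg : (↑r : ℂ).arg ≠ Real.pi := by
      rw [Complex.arg_ofReal_of_nonneg hrpos.le]; exact Real.pi_ne_zero.symm
    rw [one_div, Complex.inv_cpow _ _ harg, ← Complex.cpow_neg]
  exact hfa.eqOn_of_preconnected_of_frequently_eq hga hUconn h1U hfreq hc

end GammaRotatedAux

section FinalProof
open Set Complex
/-- the identity `e^{nw} (nw)^{-(n+v)} Γ(n+v+1) = nw ∫₀^∞ e^{n(w(1-z)+log z)} z^v dz`
for `Re(w) ≥ 1`, real `n > 0` with `n + Re(v) + 1 > 0`, where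
`(nw)^{n+v} = e^{(n+v)(log n + Log w)}` with the principal logarithm `Log`. -/
theorem gamma_integral_identity (w v : ℂ) (hw : 1 ≤ w.re) (n : ℝ) (hn : 0 < n)
    (hnv : 0 < n + v.re + 1) :
    Complex.exp ((n:ℂ) * w) *
        Complex.exp (-(((n:ℂ) + v) * ((Real.log n : ℂ) + Complex.log w))) *
        Complex.Gamma ((n:ℂ) + v + 1) =
      (n:ℂ) * w *
        ∫ z in Set.Ioi (0:ℝ),
          Complex.exp ((n:ℂ) * (w * (1 - (z:ℂ)) + (Real.log z : ℂ))) * (z:ℂ) ^ v := by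
  set a : ℂ := (n:ℂ) + v + 1 with ha_def
  have ha : 0 < a.re := by
    simp only [ha_def, Complex.add_re, Complex.one_re, Complex.ofReal_re]
    linarith
  have hwne : w ≠ 0 := by
    intro h; rw [h] at hw; simp at hw; linarith
  set c : ℂ := (n:ℂ) * w with hc_def
  have hcre : 0 < c.re := by
    have : c.re = n * w.re := by
      simp [hc_def, Complex.mul_re]
    rw [this]; nlinarith
  have hcne : c ≠ 0 := by
    intro h; rw [h] at hcre; simp at hcre
  have hint : Set.EqOn
      (fun z : ℝ => Complex.exp ((n:ℂ) * (w * (1 - (z:ℂ)) + (Real.log z : ℂ))) * (z:ℂ) ^ v)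
      (fun z : ℝ => Complex.exp ((n:ℂ) * w) * ((z:ℂ) ^ (a-1) * Complex.exp (-(c * z))))
      (Set.Ioi 0) := by
    intro z hz
    have hz : (0:ℝ) < z := hz
    have hz0 : (z:ℂ) ≠ 0 := Complex.ofReal_ne_zero.2 hz.ne'
    simp only
    have e1 : (n:ℂ) * (w * (1 - (z:ℂ)) + (Real.log z : ℂ))
        = (n:ℂ) * w + ((Complex.log (z:ℂ)) * (n:ℂ) + -(c * z)) := by
      rw [← Complex.ofReal_log hz.le]; ring
    rw [e1, Complex.exp_add, Complex.exp_add,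
      show a - 1 = (n:ℂ) + v by rw [ha_def]; ring]
    simp only [Complex.cpow_add _ _ hz0, Complex.cpow_def_of_ne_zero hz0, ← Complex.exp_add]
    congr 1
    ring
  rw [MeasureTheory.setIntegral_congr_fun measurableSet_Ioi hint,
    MeasureTheory.integral_const_mul, gamma_rotated ha hcre]
  set L : ℂ := (Real.log n : ℂ) + Complex.log w with hL
  have hlog : Complex.log c = L := Complex.log_ofReal_mul hn hwne
  have hc_exp : (n:ℂ) * w = Complex.exp L := by rw [← hlog, Complex.exp_log hcne]
  rw [Complex.cpow_def_of_ne_zero hcne, hlog]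
  rw [show (n:ℂ) * w * (Complex.exp ((n:ℂ)*w) * (Complex.exp (L * -a) * Complex.Gamma a))
      = Complex.exp L * (Complex.exp ((n:ℂ)*w) * (Complex.exp (L * -a) * Complex.Gamma a)) by
    rw [← hc_exp]]
  have key : Complex.exp ((n:ℂ)*w) * Complex.exp (-(((n:ℂ)+v) * L))
      = Complex.exp L * (Complex.exp ((n:ℂ)*w) * Complex.exp (L * -a)) := by
    rw [← Complex.exp_add, ← Complex.exp_add, ← Complex.exp_add]
    congr 1
    rw [ha_def]; ring
  linear_combination Complex.Gamma ((n:ℂ) + v + 1) * key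

end FinalProof
end
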